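/- arXiv:1701.04441 — 2 statements merged into one kernel-verified Lean document; each statement's English description precedes it below -/
import Mathlib

section
/- Every non-trivial element r ∈ N has a conjugate r̃ in N such that for every i ∈ ℤ, the reduced word representing r̃ in the free basis B(i) of N is cyclically reduced. -/
/-! Common setup: the one-relator group `H = ⟨x, b, y₁, …, yₙ | [xᵏ,b]u⟩`, where generators are
indexed by `Bool ⊕ Fin n` (`Sum.inl true ↦ x`, `Sum.inl false ↦ b`, `Sum.inr m ↦ yₘ`),
`[xᵏ,b] = x⁻ᵏb⁻¹xᵏb`, and `u` is the image of a word `u'` in the letters `y₁, …, yₙ`. -/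

/-- The single relator `[xᵏ,b]u` of `H`. -/
def relOfH (k n : ℕ) (u' : FreeGroup (Fin n)) : Set (FreeGroup (Bool ⊕ Fin n)) :=
  {((FreeGroup.of (Sum.inl true))⁻¹) ^ k * (FreeGroup.of (Sum.inl false))⁻¹ *
    (FreeGroup.of (Sum.inl true)) ^ k * FreeGroup.of (Sum.inl false) *
    FreeGroup.map Sum.inr u'}

/-- The one-relator group `H = ⟨x, b, y₁, …, yₙ | [xᵏ,b]u⟩`. -/
abbrev Hgp (k n : ℕ) (u' : FreeGroup (Fin n)) : Type :=
  PresentedGroup (relOfH k n u')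

/-- The generator `x` of `H`. -/
def xg (k n : ℕ) (u' : FreeGroup (Fin n)) : Hgp k n u' := PresentedGroup.of (Sum.inl true)

/-- The generator `b` of `H`. -/
def bg (k n : ℕ) (u' : FreeGroup (Fin n)) : Hgp k n u' := PresentedGroup.of (Sum.inl false)

/-- The generator `yₘ` of `H`. -/
def yg (k n : ℕ) (u' : FreeGroup (Fin n)) (m : Fin n) : Hgp k n u' :=
  PresentedGroup.of (Sum.inr m)

/-- For `g ∈ H` and `i ∈ ℤ`, the element `g_i := x⁻ⁱ g xⁱ`. -/
def cj (k n : ℕ) (u' : FreeGroup (Fin n)) (i : ℤ) (g : Hgp k n u') : Hgp k n u' :=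
  xg k n u' ^ (-i) * g * xg k n u' ^ i

/-- The element `b_i = x⁻ⁱ b xⁱ`. -/
def bi (k n : ℕ) (u' : FreeGroup (Fin n)) (i : ℤ) : Hgp k n u' := cj k n u' i (bg k n u')

/-- The element `y_{m,i} = x⁻ⁱ yₘ xⁱ`. -/
def yi (k n : ℕ) (u' : FreeGroup (Fin n)) (m : Fin n) (i : ℤ) : Hgp k n u' :=
  cj k n u' i (yg k n u' m)

/-- The element `u_i = x⁻ⁱ u xⁱ`, where `u` is the image of `u'` in `H`. -/
def ui (k n : ℕ) (u' : FreeGroup (Fin n)) (i : ℤ) : Hgp k n u' :=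
  cj k n u' i (FreeGroup.lift (yg k n u') u')

/-- The subgroup `G_{i,∞} = ⟨G_l : l ≥ i⟩` of `H`, generated by all `b_j`, `y_{m,j}` with
`j ≥ i`. -/
def Gge (k n : ℕ) (u' : FreeGroup (Fin n)) (i : ℤ) : Subgroup (Hgp k n u') :=
  Subgroup.closure
    ({g | ∃ j, i ≤ j ∧ g = bi k n u' j} ∪ {g | ∃ m j, i ≤ j ∧ g = yi k n u' m j})

/-- The subgroup `G_{−∞,i} = ⟨G_l : l ≤ i⟩` of `H`, generated by all `b_j`, `y_{m,j}` with
`j ≤ i`. -/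
def Gle (k n : ℕ) (u' : FreeGroup (Fin n)) (i : ℤ) : Subgroup (Hgp k n u') :=
  Subgroup.closure
    ({g | ∃ j, j ≤ i ∧ g = bi k n u' j} ∪ {g | ∃ m j, j ≤ i ∧ g = yi k n u' m j})

/-- `a` is the α-limit of `r`: the largest index `i` with `r ∈ G_{i,∞}`. -/
def IsAlphaLimit (k n : ℕ) (u' : FreeGroup (Fin n)) (r : Hgp k n u') (a : ℤ) : Prop :=
  r ∈ Gge k n u' a ∧ ∀ i, r ∈ Gge k n u' i → i ≤ a

/-- `w` is the ω-limit of `r`: the smallest index `i` with `r ∈ G_{−∞,i}`. -/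
def IsOmegaLimit (k n : ℕ) (u' : FreeGroup (Fin n)) (r : Hgp k n u') (w : ℤ) : Prop :=
  r ∈ Gle k n u' w ∧ ∀ i, r ∈ Gle k n u' i → w ≤ i

/-- The property that `φ : H →* Multiplicative ℤ` is the exponent-sum-in-`x` homomorphism. -/
def IsExpSum (k n : ℕ) (u' : FreeGroup (Fin n))
    (φ : Hgp k n u' →* Multiplicative ℤ) : Prop :=
  φ (xg k n u') = Multiplicative.ofAdd 1 ∧ φ (bg k n u') = 1 ∧ ∀ m, φ (yg k n u' m) = 1

/-- The normal closure, in the subgroup `N ≤ H`, of a subset `S ⊆ N`, viewed as a subgroup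
of `H`: the subgroup generated by all `N`-conjugates of elements of `S`. -/
def nclIn (k n : ℕ) (u' : FreeGroup (Fin n)) (N : Subgroup (Hgp k n u'))
    (S : Set (Hgp k n u')) : Subgroup (Hgp k n u') :=
  Subgroup.closure {h | ∃ g ∈ N, ∃ t ∈ S, h = g * t * g⁻¹}

/-- A reduced word is *cyclically reduced* if its first letter is not the inverse of its
last letter. -/
def IsCyclicallyReducedWord {X : Type*} (w : List (X × Bool)) : Prop :=
  ∀ a b : X × Bool, w.head? = some a → w.getLast? = some b → ¬(a.1 = b.1 ∧ a.2 = !b.2)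

/-!
Passing from the basis `B(i + 1)` to `B(i)` keeps every letter except the last one, `b_{i+k}`,
which becomes `b_i u_i` with `u_i` a word in the `y`-letters; the passage back has the same shape.
Such a substitution `a ↦ f(a) V(a)` of the `b`-letters (`f` injective, `V(a)` a word in the
`y`-letters, which are fixed) cancels no `b`-letter, so a positive first `b`-letter stays in first
position. Applied to the inverse, this controls the last letter as well: a cyclically reduced word
beginning with a positive `b`-letter is mapped to another one. Hence it suffices to conjugate `r`
so that its word in `B(0)` is cyclically reduced and begins with a positive `b`-letter, ends with a
negative one, or has no `b`-letter at all; a cyclic permutation of a cyclically reduced conjugate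
achieves this.
-/

namespace FreeGroup

section CyclicallyReduced

variable {α : Type*}

theorem isCyclicallyReducedWord_iff {L : List (α × Bool)} :
    IsCyclicallyReducedWord L ↔ ∀ a ∈ L.getLast?, ∀ b ∈ L.head?, a.1 = b.1 → a.2 = b.2 := by
  simp only [IsCyclicallyReducedWord, Option.mem_def]
  grind

theorem isCyclicallyReducedWord_invRev {L : List (α × Bool)} :
    IsCyclicallyReducedWord (invRev L) ↔ IsCyclicallyReducedWord L := by
  simp only [isCyclicallyReducedWord_iff, invRev, List.getLast?_reverse, List.head?_reverse,
    List.head?_map, List.getLast?_map]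
  cases L.head? <;> cases L.getLast? <;> simp [eq_comm]

theorem IsCyclicallyReduced.append_comm {L₁ L₂ : List (α × Bool)}
    (h : IsCyclicallyReduced (L₁ ++ L₂)) : IsCyclicallyReduced (L₂ ++ L₁) := by
  rcases eq_or_ne L₁ [] with rfl | h₁
  · simpa using h
  rcases eq_or_ne L₂ [] with rfl | h₂
  · simpa using h
  obtain ⟨hred, hcyc⟩ := h
  obtain ⟨hred₁, hred₂, hjoin⟩ := List.isChain_append.1 hred
  refine ⟨List.isChain_append.2 ⟨hred₂, hred₁, ?_⟩, ?_⟩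
  · simpa [List.getLast?_append_of_ne_nil _ h₂, List.head?_append_of_ne_nil _ h₁] using hcyc
  · simpa [List.getLast?_append_of_ne_nil _ h₁, List.head?_append_of_ne_nil _ h₂] using hjoin

@[simp]
theorem mk_singleton_true (x : α) : mk [(x, true)] = of x := rfl

@[simp]
theorem mk_singleton_false (x : α) : mk [(x, false)] = (of x)⁻¹ := by
  rw [of, inv_mk]
  rfl

variable [DecidableEq α]

theorem toWord_mk_of_isReduced {L : List (α × Bool)} (h : IsReduced L) : (mk L).toWord = L := by
  rw [toWord_mk, h.reduce_eq]

theorem isCyclicallyReducedWord_toWord_iff (x : FreeGroup α) :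
    IsCyclicallyReducedWord x.toWord ↔ IsCyclicallyReduced x.toWord := by
  rw [isCyclicallyReducedWord_iff, isCyclicallyReduced_iff, and_iff_right isReduced_toWord]

theorem isCyclicallyReducedWord_toWord_inv (x : FreeGroup α) :
    IsCyclicallyReducedWord x⁻¹.toWord ↔ IsCyclicallyReducedWord x.toWord := by
  rw [toWord_inv, isCyclicallyReducedWord_invRev]

theorem isCyclicallyReducedWord_toWord_iff_head? {x : FreeGroup α} {p : α × Bool}
    (h : x.toWord.head? = some p) :
    IsCyclicallyReducedWord x.toWord ↔ x⁻¹.toWord.head? ≠ some p := by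
  simp only [IsCyclicallyReducedWord, toWord_inv, invRev, List.head?_reverse, List.getLast?_map,
    h, Option.some.injEq]
  grind

theorem exists_conj_isCyclicallyReducedWord (x : FreeGroup α) :
    ∃ c, IsCyclicallyReducedWord (c⁻¹ * x * c).toWord := by
  have hx := congrArg mk (reduceCyclically.conj_conjugator_reduceCyclically x.toWord)
  have hcyc := reduceCyclically.isCyclicallyReduced (isReduced_toWord (x := x))
  generalize reduceCyclically.conjugator x.toWord = C at hx
  generalize reduceCyclically x.toWord = R at hx hcyc
  rw [← mul_mk, ← mul_mk, ← inv_mk, mk_toWord] at hx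
  refine ⟨mk C, ?_⟩
  rw [← hx, show (mk C)⁻¹ * (mk C * mk R * (mk C)⁻¹) * mk C = mk R by group,
    isCyclicallyReducedWord_toWord_iff, toWord_mk_of_isReduced hcyc.isReduced]
  exact hcyc

theorem exists_conj_head?_eq {x : FreeGroup α} (hx : IsCyclicallyReducedWord x.toWord)
    {p : α × Bool} (hp : p ∈ x.toWord) :
    ∃ c, (c⁻¹ * x * c).toWord.head? = some p ∧ IsCyclicallyReducedWord (c⁻¹ * x * c).toWord := by
  obtain ⟨L₁, L₂, hL⟩ := List.append_of_mem hp
  rw [isCyclicallyReducedWord_toWord_iff, hL] at hx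
  have hrot : IsCyclicallyReduced (p :: L₂ ++ L₁) := hx.append_comm
  have hconj : (mk L₁)⁻¹ * x * mk L₁ = mk (p :: L₂ ++ L₁) := by
    rw [← mk_toWord (x := x), hL, ← mul_mk, ← mul_mk, ← List.singleton_append, ← mul_mk]
    group
  refine ⟨mk L₁, ?_⟩
  rw [hconj, isCyclicallyReducedWord_toWord_iff, toWord_mk_of_isReduced hrot.isReduced]
  exact ⟨rfl, hrot⟩

end CyclicallyReduced

variable {A B : Type*}

def substInl (f : A → A) (V : A → FreeGroup B) : FreeGroup (A ⊕ B) →* FreeGroup (A ⊕ B) :=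
  FreeGroup.lift (Sum.elim (fun a => of (Sum.inl (f a)) * map Sum.inr (V a)) (of ∘ Sum.inr))

section substInl

variable (f : A → A) (V : A → FreeGroup B)

@[simp]
theorem substInl_of_inl (a : A) :
    substInl f V (of (Sum.inl a)) = of (Sum.inl (f a)) * map Sum.inr (V a) :=
  lift_apply_of

@[simp]
theorem substInl_of_inr (b : B) : substInl f V (of (Sum.inr b)) = of (Sum.inr b) :=
  lift_apply_of

@[simp]
theorem substInl_map_inr (w : FreeGroup B) : substInl f V (map Sum.inr w) = map Sum.inr w := by
  suffices (substInl f V).comp (map Sum.inr) = map Sum.inr from DFunLike.congr_fun this w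
  ext b
  simp

end substInl

variable [DecidableEq A] [DecidableEq B]

theorem toWord_map_inr (w : FreeGroup B) :
    (map Sum.inr w : FreeGroup (A ⊕ B)).toWord = w.toWord.map fun x => (Sum.inr x.1, x.2) := by
  conv_lhs => rw [← mk_toWord (x := w)]
  rw [map.mk, toWord_mk_of_isReduced]
  exact (List.isChain_map _).2 (isReduced_toWord.imp fun _ _ h h' => h (Sum.inr_injective h'))

theorem head?_toWord_map_inr_ne_inl (w : FreeGroup B) (a : A) (s : Bool) :
    (map Sum.inr w : FreeGroup (A ⊕ B)).toWord.head? ≠ some (Sum.inl a, s) := by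
  rw [toWord_map_inr, List.head?_map]
  simp

theorem toWord_map_inr_mul_mk_mul {w : FreeGroup B} {a : A} {s : Bool} {z : FreeGroup (A ⊕ B)}
    (hz : z.toWord.head? ≠ some (Sum.inl a, !s)) :
    (map Sum.inr w * mk [(Sum.inl a, s)] * z).toWord =
      (w.toWord.map fun x => (Sum.inr x.1, x.2)) ++ (Sum.inl a, s) :: z.toWord := by
  rw [← toWord_map_inr]
  have hred : IsReduced ((map Sum.inr w).toWord ++ (Sum.inl a, s) :: z.toWord) := by
    refine List.isChain_append.2 ⟨isReduced_toWord, List.isChain_cons.2 ⟨?_, isReduced_toWord⟩, ?_⟩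
    · rintro ⟨c, t⟩ hct rfl
      cases s <;> cases t <;> simp_all
    · rintro ⟨c, t⟩ hct y hy
      rw [toWord_map_inr, List.getLast?_map] at hct
      obtain ⟨_, -, h⟩ := Option.map_eq_some_iff.1 hct
      obtain rfl : y = (Sum.inl a, s) := by simpa using hy.symm
      cases h
      simp
  rw [← toWord_mk_of_isReduced hred, ← mul_mk, mk_toWord, mul_assoc,
    show (Sum.inl a, s) :: z.toWord = [(Sum.inl a, s)] ++ z.toWord from rfl, ← mul_mk, mk_toWord]

/-- `z = w · (a, s) · z'` without cancellation: the reduced word of `z` consists of the letters of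
`w`, then its first `A`-letter `(a, s)`, then the reduced word of `z'`. -/
def LeadsWith (z : FreeGroup (A ⊕ B)) (w : FreeGroup B) (a : A) (s : Bool) : Prop :=
  ∃ z', z = map Sum.inr w * mk [(Sum.inl a, s)] * z' ∧ z'.toWord.head? ≠ some (Sum.inl a, !s)

namespace LeadsWith

variable {z : FreeGroup (A ⊕ B)} {w : FreeGroup B} {a : A} {s : Bool}

theorem map_inr_mul (h : LeadsWith z w a s) (v : FreeGroup B) :
    LeadsWith (map Sum.inr v * z) (v * w) a s := by
  obtain ⟨z', rfl, hz'⟩ := h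
  exact ⟨z', by simp only [_root_.map_mul, mul_assoc], hz'⟩

theorem head?_eq_inl_iff (h : LeadsWith z w a s) {c : A} {t : Bool} :
    z.toWord.head? = some (Sum.inl c, t) ↔ w = 1 ∧ a = c ∧ s = t := by
  obtain ⟨z', rfl, hz'⟩ := h
  rw [toWord_map_inr_mul_mk_mul hz']
  rcases hw : w.toWord with _ | ⟨x, xs⟩
  · simp [toWord_eq_nil_iff.1 hw]
  · have : w ≠ 1 := by rintro rfl; simp at hw
    simp [this]

end LeadsWith

theorem eq_map_inr_or_leadsWith (z : FreeGroup (A ⊕ B)) :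
    (∃ w, map Sum.inr w = z) ∨ ∃ w a s, LeadsWith z w a s := by
  suffices ∀ L : List ((A ⊕ B) × Bool), IsReduced L →
      (∃ w, map Sum.inr w = mk L) ∨ ∃ w a s, LeadsWith (mk L) w a s by
    simpa only [mk_toWord] using this z.toWord isReduced_toWord
  intro L hL
  induction L with
  | nil => exact Or.inl ⟨1, by simp [one_eq_mk]⟩
  | cons x L ih =>
    have hL' : IsReduced L := hL.tail
    have hmk : mk (x :: L) = mk [x] * mk L := by rw [mul_mk]; rfl
    obtain ⟨c | b, s⟩ := x
    · refine Or.inr ⟨1, c, s, mk L, by rw [hmk, _root_.map_one, one_mul], ?_⟩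
      rw [toWord_mk_of_isReduced hL']
      intro h
      have := (List.isChain_cons.1 hL).1 _ h rfl
      cases s <;> simp at this
    · rcases ih hL' with ⟨w, hw⟩ | ⟨w, a, t, h⟩
      · exact Or.inl ⟨mk [(b, s)] * w, by rw [_root_.map_mul, hw, hmk]; rfl⟩
      · exact Or.inr ⟨mk [(b, s)] * w, a, t, by rw [hmk]; exact h.map_inr_mul (mk [(b, s)])⟩

/-- `substInl f V` cancels no `A`-letter, so the first one survives (renamed by `f`). -/
theorem LeadsWith.substInl {f : A → A} (hf : Function.Injective f) (V : A → FreeGroup B)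
    {z : FreeGroup (A ⊕ B)} {w : FreeGroup B} {a : A} {s : Bool} (h : LeadsWith z w a s) :
    LeadsWith (substInl f V z) (if s then w else w * (V a)⁻¹) (f a) s := by
  induction hn : z.toWord.length using Nat.strong_induction_on generalizing z w a s with
  | _ n ih =>
  obtain ⟨z', rfl, hz'⟩ := h
  have hlen : z'.toWord.length < n := by
    rw [← hn, toWord_map_inr_mul_mk_mul hz']
    simp
    omega
  rcases eq_map_inr_or_leadsWith z' with ⟨v, rfl⟩ | ⟨w₁, a₁, s₁, h₁⟩
  · cases s
    · refine ⟨map Sum.inr v, ?_, head?_toWord_map_inr_ne_inl _ _ _⟩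
      simp [mul_assoc]
    · refine ⟨map Sum.inr (V a * v), ?_, head?_toWord_map_inr_ne_inl _ _ _⟩
      simp [mul_assoc]
  · have h₁' := ih _ hlen h₁ rfl
    cases s
    · refine ⟨FreeGroup.substInl f V z', by simp [mul_assoc], fun h => ?_⟩
      obtain ⟨hw₁, ha₁, rfl⟩ := h₁'.head?_eq_inl_iff.1 h
      exact hz' (h₁.head?_eq_inl_iff.2 ⟨hw₁, hf ha₁, rfl⟩)
    · refine ⟨map Sum.inr (V a) * FreeGroup.substInl f V z', by simp [mul_assoc], fun h => ?_⟩
      obtain ⟨hw₁, ha₁, rfl⟩ := (h₁'.map_inr_mul _).head?_eq_inl_iff.1 h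
      obtain rfl := hf ha₁
      have : w₁ = 1 := by simpa [← mul_assoc, mul_inv_eq_one] using hw₁
      exact hz' (h₁.head?_eq_inl_iff.2 ⟨this, rfl, rfl⟩)

section Injective

variable {f : A → A} (hf : Function.Injective f) (V : A → FreeGroup B)
include hf

theorem head?_substInl_eq_inl_true_iff {z : FreeGroup (A ⊕ B)} {a : A} :
    (substInl f V z).toWord.head? = some (Sum.inl (f a), true) ↔
      z.toWord.head? = some (Sum.inl a, true) := by
  rcases eq_map_inr_or_leadsWith z with ⟨w, rfl⟩ | ⟨w, a₁, s, h⟩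
  · simp only [substInl_map_inr, head?_toWord_map_inr_ne_inl]
  · rw [(h.substInl hf V).head?_eq_inl_iff, h.head?_eq_inl_iff, hf.eq_iff]
    cases s <;> simp

theorem isCyclicallyReducedWord_substInl {z : FreeGroup (A ⊕ B)} {a : A}
    (hz : IsCyclicallyReducedWord z.toWord) (ha : z.toWord.head? = some (Sum.inl a, true)) :
    IsCyclicallyReducedWord (substInl f V z).toWord := by
  rw [isCyclicallyReducedWord_toWord_iff_head? ((head?_substInl_eq_inl_true_iff hf V).2 ha),
    ← _root_.map_inv, ne_eq, head?_substInl_eq_inl_true_iff hf V]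
  exact (isCyclicallyReducedWord_toWord_iff_head? ha).1 hz

end Injective

/-- Unlike cyclic reducedness alone, this is preserved by `substInl f V` for injective `f`. -/
def IsAnchored (z : FreeGroup (A ⊕ B)) : Prop :=
  IsCyclicallyReducedWord z.toWord ∧
    ((∃ a, z.toWord.head? = some (Sum.inl a, true)) ∨
      (∃ a, z⁻¹.toWord.head? = some (Sum.inl a, true)) ∨ ∃ w, map Sum.inr w = z)

theorem IsAnchored.inv {z : FreeGroup (A ⊕ B)} (h : IsAnchored z) : IsAnchored z⁻¹ := by
  rw [IsAnchored, isCyclicallyReducedWord_toWord_inv, inv_inv]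
  obtain ⟨hcyc, ha | ha | ⟨w, rfl⟩⟩ := h
  · exact ⟨hcyc, Or.inr (Or.inl ha)⟩
  · exact ⟨hcyc, Or.inl ha⟩
  · exact ⟨hcyc, Or.inr (Or.inr ⟨w⁻¹, _root_.map_inv _ _⟩)⟩

theorem IsAnchored.substInl {f : A → A} (hf : Function.Injective f) (V : A → FreeGroup B)
    {z : FreeGroup (A ⊕ B)} (h : IsAnchored z) : IsAnchored (substInl f V z) := by
  have of_head : ∀ {z : FreeGroup (A ⊕ B)} {a : A}, IsCyclicallyReducedWord z.toWord →
      z.toWord.head? = some (Sum.inl a, true) → IsAnchored (FreeGroup.substInl f V z) :=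
    fun hz ha => ⟨isCyclicallyReducedWord_substInl hf V hz ha,
      Or.inl ⟨_, (head?_substInl_eq_inl_true_iff hf V).2 ha⟩⟩
  obtain ⟨hcyc, ⟨a, ha⟩ | ⟨a, ha⟩ | ⟨w, rfl⟩⟩ := h
  · exact of_head hcyc ha
  · simpa using (of_head ((isCyclicallyReducedWord_toWord_inv z).2 hcyc) ha).inv
  · rw [substInl_map_inr]
    exact ⟨hcyc, Or.inr (Or.inr ⟨w, rfl⟩)⟩

theorem exists_conj_isAnchored_of_mem {z : FreeGroup (A ⊕ B)}
    (hz : IsCyclicallyReducedWord z.toWord) {a : A} (ha : (Sum.inl a, true) ∈ z.toWord) :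
    ∃ c, IsAnchored (c⁻¹ * z * c) := by
  obtain ⟨c, hc, hcyc⟩ := exists_conj_head?_eq hz ha
  exact ⟨c, hcyc, Or.inl ⟨a, hc⟩⟩

theorem exists_conj_isAnchored (z : FreeGroup (A ⊕ B)) : ∃ c, IsAnchored (c⁻¹ * z * c) := by
  obtain ⟨c₁, hc₁⟩ := exists_conj_isCyclicallyReducedWord z
  suffices ∃ c, IsAnchored (c⁻¹ * (c₁⁻¹ * z * c₁) * c) by
    obtain ⟨c, hc⟩ := this
    exact ⟨c₁ * c, by simpa [mul_assoc] using hc⟩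
  rcases eq_map_inr_or_leadsWith (c₁⁻¹ * z * c₁) with ⟨w, hw⟩ | ⟨w, a, s, z', hz, hz'⟩
  · exact ⟨1, by simpa using ⟨hc₁, Or.inr (Or.inr ⟨w, hw⟩)⟩⟩
  have hmem : (Sum.inl a, s) ∈ (c₁⁻¹ * z * c₁).toWord := by
    rw [hz, toWord_map_inr_mul_mk_mul hz']
    simp
  cases s
  · have hmem' : (Sum.inl a, true) ∈ (c₁⁻¹ * z * c₁)⁻¹.toWord := by
      rw [toWord_inv, invRev, List.mem_reverse, List.mem_map]
      exact ⟨_, hmem, rfl⟩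
    obtain ⟨c, hc⟩ := exists_conj_isAnchored_of_mem
      ((isCyclicallyReducedWord_toWord_inv _).2 hc₁) hmem'
    exact ⟨c, by simpa [mul_assoc] using hc.inv⟩
  · exact exists_conj_isAnchored_of_mem hc₁ hmem

end FreeGroup

namespace FreeGroupBasis

open FreeGroup

variable {A B G : Type*} [Group G] {β β' : FreeGroupBasis (A ⊕ B) G}

theorem repr_symm_map_inr_eq (hinr : ∀ b, β (Sum.inr b) = β' (Sum.inr b)) (w : FreeGroup B) :
    β.repr.symm (map Sum.inr w) = β'.repr.symm (map Sum.inr w) := by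
  suffices β.repr.symm.toMonoidHom.comp (map Sum.inr) = β'.repr.symm.toMonoidHom.comp (map Sum.inr)
    from DFunLike.congr_fun this w
  ext b
  exact hinr b

theorem repr_eq_substInl (f : A → A) (V : A → FreeGroup B)
    (hinr : ∀ b, β (Sum.inr b) = β' (Sum.inr b))
    (hinl : ∀ a, β (Sum.inl a) = β' (Sum.inl (f a)) * β'.repr.symm (map Sum.inr (V a))) (g : G) :
    β'.repr g = substInl f V (β.repr g) := by
  suffices β'.repr.toMonoidHom = (substInl f V).comp β.repr.toMonoidHom
    from DFunLike.congr_fun this g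
  refine β.ext_hom _ _ fun x => ?_
  simp only [MonoidHom.comp_apply, MulEquiv.coe_toMonoidHom, repr_apply_coe]
  rcases x with a | b
  · rw [substInl_of_inl, hinl, _root_.map_mul, repr_apply_coe, MulEquiv.apply_symm_apply]
  · rw [substInl_of_inr, hinr, repr_apply_coe]

theorem repr_eq_substInl_symm (e : A ≃ A) (V : A → FreeGroup B)
    (hinr : ∀ b, β (Sum.inr b) = β' (Sum.inr b))
    (hinl : ∀ a, β (Sum.inl a) = β' (Sum.inl (e a)) * β'.repr.symm (map Sum.inr (V a))) (g : G) :
    β.repr g = substInl e.symm (fun a => (V (e.symm a))⁻¹) (β'.repr g) := by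
  refine repr_eq_substInl _ _ (fun b => (hinr b).symm) (fun a => ?_) g
  rw [_root_.map_inv, _root_.map_inv, repr_symm_map_inr_eq hinr, hinl, Equiv.apply_symm_apply,
    mul_inv_cancel_right]

end FreeGroupBasis

section OneRelator

open FreeGroup

variable {k n : ℕ} {u' : FreeGroup (Fin n)}

theorem relator_eq_one :
    (xg k n u')⁻¹ ^ k * (bg k n u')⁻¹ * xg k n u' ^ k * bg k n u' *
      FreeGroup.lift (yg k n u') u' = 1 := by
  have hu : PresentedGroup.mk (relOfH k n u') (map Sum.inr u') =
      FreeGroup.lift (yg k n u') u' := by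
    rw [← MonoidHom.comp_apply]
    congr 1
    ext m
    rfl
  have := PresentedGroup.one_of_mem (rels := relOfH k n u') (Set.mem_singleton _)
  simp only [_root_.map_mul, _root_.map_pow, _root_.map_inv, hu] at this
  exact this

theorem bi_add_k (i : ℤ) : bi k n u' (i + k) = bi k n u' i * ui k n u' i := by
  simp only [bi, ui, cj, eq_inv_of_mul_eq_one_right relator_eq_one]
  group

/-- `u_i`, as a word in the letters `y_{m,i}`. -/
def uWord (u' : FreeGroup (Fin n)) (i : ℤ) : FreeGroup (Fin n × ℤ) :=
  map (fun m => (m, i)) u'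

def carry (u' : FreeGroup (Fin n)) (k : ℕ) (i : ℤ) (t : Fin k) : FreeGroup (Fin n × ℤ) :=
  if (t : ℕ) + 1 = k then uWord u' i else 1

variable {φ : Hgp k n u' →* Multiplicative ℤ}
  (basis : ℤ → FreeGroupBasis (Fin k ⊕ Fin n × ℤ) φ.ker)
  (hb : ∀ i : ℤ, ∀ t : Fin k, ((basis i) (Sum.inl t) : Hgp k n u') = bi k n u' (i + (t : ℕ)))
  (hy : ∀ i : ℤ, ∀ m : Fin n, ∀ j : ℤ, ((basis i) (Sum.inr (m, j)) : Hgp k n u') = yi k n u' m j)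

include hy in
theorem basis_inr_eq (i j : ℤ) (x : Fin n × ℤ) : basis i (Sum.inr x) = basis j (Sum.inr x) :=
  Subtype.ext (by rw [hy, hy])

include hy in
theorem coe_basis_repr_symm_uWord (i j : ℤ) :
    ((basis j).repr.symm (map Sum.inr (uWord u' i)) : Hgp k n u') = ui k n u' i := by
  suffices φ.ker.subtype.comp ((basis j).repr.symm.toMonoidHom.comp
      ((map Sum.inr).comp (map fun m => (m, i)))) =
      (MulAut.conj (xg k n u' ^ (-i))).toMonoidHom.comp (FreeGroup.lift (yg k n u')) by
    have h := DFunLike.congr_fun this u'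
    simp only [MonoidHom.comp_apply, MulEquiv.coe_toMonoidHom, MulAut.conj_apply, zpow_neg,
      inv_inv] at h
    rw [uWord, ui, cj, zpow_neg]
    exact h
  ext m
  simp only [MonoidHom.comp_apply, MulEquiv.coe_toMonoidHom, MulAut.conj_apply, map.of,
    lift_apply_of, Subgroup.coe_subtype]
  rw [zpow_neg, inv_inv, ← zpow_neg]
  exact hy j m i

include hb hy in
theorem basis_succ_inl (i : ℤ) (t : Fin k) :
    basis (i + 1) (Sum.inl t) =
      basis i (Sum.inl (finRotate k t)) * (basis i).repr.symm (map Sum.inr (carry u' k i t)) := by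
  obtain ⟨k, rfl⟩ : ∃ k', k = k' + 1 := ⟨k - 1, by have := t.pos; omega⟩
  apply Subtype.ext
  rw [Subgroup.coe_mul, hb, hb]
  by_cases ht : t = Fin.last k
  · subst ht
    rw [carry, if_pos (by simp), coe_basis_repr_symm_uWord basis hy, finRotate_last, Fin.val_zero,
      Nat.cast_zero, add_zero, ← bi_add_k, Fin.val_last]
    congr 1
    push_cast
    ring
  · rw [carry, if_neg (by simpa [Fin.ext_iff] using ht), coe_finRotate_of_ne_last ht]
    simp only [_root_.map_one, OneMemClass.coe_one, mul_one]
    congr 1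
    push_cast
    ring

include hb hy in
theorem isAnchored_repr_succ_iff (i : ℤ) (g : φ.ker) :
    IsAnchored ((basis (i + 1)).repr g) ↔ IsAnchored ((basis i).repr g) := by
  have hinr := basis_inr_eq basis hy (i + 1) i
  have hinl := basis_succ_inl basis hb hy i
  constructor <;> intro h
  · rw [FreeGroupBasis.repr_eq_substInl _ _ hinr hinl]
    exact h.substInl (finRotate k).injective _
  · rw [FreeGroupBasis.repr_eq_substInl_symm _ _ hinr hinl]
    exact h.substInl (finRotate k).symm.injective _

include hb hy in
theorem isAnchored_repr {g : φ.ker} (h : IsAnchored ((basis 0).repr g)) (i : ℤ) :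
    IsAnchored ((basis i).repr g) := by
  induction i using Int.induction_on with
  | zero => exact h
  | succ i ih => exact (isAnchored_repr_succ_iff basis hb hy i g).2 ih
  | pred i ih => exact (isAnchored_repr_succ_iff basis hb hy (-i - 1) g).1 (by simpa using ih)

end OneRelator

theorem exists_suitable_conjugate_general (k n : ℕ)
    (u' : FreeGroup (Fin n))
    (φ : Hgp k n u' →* Multiplicative ℤ)
    (basis : ∀ i : ℤ, FreeGroupBasis (Fin k ⊕ Fin n × ℤ) ↥φ.ker)
    (hb : ∀ i : ℤ, ∀ t : Fin k,
      ((basis i) (Sum.inl t) : Hgp k n u') = bi k n u' (i + (t : ℕ)))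
    (hy : ∀ i : ℤ, ∀ m : Fin n, ∀ j : ℤ,
      ((basis i) (Sum.inr (m, j)) : Hgp k n u') = yi k n u' m j)
    (r : Hgp k n u') (hr : r ∈ φ.ker) :
    ∃ rt : ↥φ.ker, (∃ g : ↥φ.ker, g⁻¹ * ⟨r, hr⟩ * g = rt) ∧
      ∀ i : ℤ, IsCyclicallyReducedWord (((basis i).repr rt).toWord) := by
  obtain ⟨c, hc⟩ := FreeGroup.exists_conj_isAnchored ((basis 0).repr ⟨r, hr⟩)
  set g := (basis 0).repr.symm c
  refine ⟨g⁻¹ * ⟨r, hr⟩ * g, ⟨g, rfl⟩, fun i => (isAnchored_repr basis hb hy ?_ i).1⟩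
  simpa [g] using hc

/-- Corollary 3.4: every non-trivial `r ∈ N` has a conjugate `r̃` (in `N`) whose reduced word
in every basis `B(i)` of `N` is cyclically reduced (a *suitable conjugate*). -/
theorem exists_suitable_conjugate (k n : ℕ) (hk : 1 ≤ k) (hn : 1 ≤ n)
    (u' : FreeGroup (Fin n)) (hu : u' ≠ 1)
    (φ : Hgp k n u' →* Multiplicative ℤ) (hφ : IsExpSum k n u' φ)
    (basis : ∀ i : ℤ, FreeGroupBasis (Fin k ⊕ Fin n × ℤ) ↥φ.ker)
    (hb : ∀ i : ℤ, ∀ t : Fin k,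
      ((basis i) (Sum.inl t) : Hgp k n u') = bi k n u' (i + (t : ℕ)))
    (hy : ∀ i : ℤ, ∀ m : Fin n, ∀ j : ℤ,
      ((basis i) (Sum.inr (m, j)) : Hgp k n u') = yi k n u' m j)
    (r : Hgp k n u') (hr : r ∈ φ.ker) (hr1 : r ≠ 1) :
    ∃ rt : ↥φ.ker, (∃ g : ↥φ.ker, g⁻¹ * ⟨r, hr⟩ * g = rt) ∧
      ∀ i : ℤ, IsCyclicallyReducedWord (((basis i).repr rt).toWord) :=
  exists_suitable_conjugate_general k n u' φ basis hb hy r hr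
end

section
/- Let H̃ be the free group on {x,b}, F the free group on {y₁,…,yₙ}, u ∈ F nontrivial, and H = H̃ *_{[xᵏ,b]=u⁻¹} F the amalgamated product over infinite cyclic subgroups. Let r̃ ∈ H̃ and suppose that [xᵏ,b]ᵖ ∉ ((r̃)) for all p ≥ 1, where ((r̃)) is the normal closure of r̃ in H̃. Then the natural map H̃/((r̃)) → H/⟨⟨r̃⟩⟩ is injective, where ⟨⟨r̃⟩⟩ is the normal closure of r̃ in H. -/
/-! Setup: `H̃` is the free group on `{x, b}` (modelled as `FreeGroup Bool`, `true ↦ x`,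
`false ↦ b`), `F` is the free group on `{y₁, …, yₙ}`, and
`H = H̃ *_{[xᵏ,b] = u⁻¹} F` is the amalgamated product over infinite cyclic subgroups,
realised as the pushout of the two maps `ℤ → H̃`, `ℤ → F` sending a generator of `ℤ` to
`[xᵏ,b]` and `u⁻¹` respectively. -/

/-- The word `[xᵏ,b] = x⁻ᵏb⁻¹xᵏb` in the free group on `{x, b}`. -/
def commWord (k : ℕ) : FreeGroup Bool :=
  ((FreeGroup.of true)⁻¹) ^ k * (FreeGroup.of false)⁻¹ * (FreeGroup.of true) ^ k *
    FreeGroup.of false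

/-- The two factors `H̃ = FreeGroup Bool` and `F = FreeGroup (Fin n)`. -/
def Fac (n : ℕ) : Bool → Type := fun i =>
  match i with
  | true => FreeGroup Bool
  | false => FreeGroup (Fin n)

instance (n : ℕ) : (i : Bool) → Group (Fac n i) := fun i =>
  match i with
  | true => inferInstanceAs (Group (FreeGroup Bool))
  | false => inferInstanceAs (Group (FreeGroup (Fin n)))

/-- The diagram of maps from the amalgamated copy of `ℤ` into the two factors, sending the
generator to `[xᵏ,b]` and to `u⁻¹` respectively. -/
def amalMaps (k n : ℕ) (u' : FreeGroup (Fin n)) :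
    ∀ i : Bool, Multiplicative ℤ →* Fac n i := fun i =>
  match i with
  | true => zpowersHom (FreeGroup Bool) (commWord k)
  | false => zpowersHom (FreeGroup (Fin n)) u'⁻¹

/-- The amalgamated product `H = H̃ *_{[xᵏ,b]=u⁻¹} F`. -/
abbrev Amal (k n : ℕ) (u' : FreeGroup (Fin n)) : Type :=
  Monoid.PushoutI (amalMaps k n u')

/-! Divide the first factor of `H` by `((r̃))`, giving the amalgam `(H̃/((r̃))) *_ℤ F`.
The hypothesis on `[xᵏ,b]ᵖ` and torsion-freeness of `F` say that `ℤ` still embeds in both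
factors of this amalgam, so `H̃/((r̃))` embeds in it. The induced map `H → (H̃/((r̃))) *_ℤ F`
kills `r̃`, hence `⟨⟨r̃⟩⟩`, so an element of `H̃` lying in `⟨⟨r̃⟩⟩` is trivial in `H̃/((r̃))`. -/

open Function

theorem zpowersHom_injective {G : Type*} [Group G] {g : G} (hg : ¬IsOfFinOrder g) :
    Injective (zpowersHom G g) :=
  (injective_zpow_iff_not_isOfFinOrder.mpr hg).comp Multiplicative.toAdd.injective

theorem MonoidHom.comp_zpowersHom {G G' : Type*} [Group G] [Group G'] (f : G →* G') (g : G) :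
    f.comp (zpowersHom G g) = zpowersHom G' (f g) := by
  ext; simp

theorem QuotientGroup.not_isOfFinOrder_mk {G : Type*} [Group G] {N : Subgroup G} [N.Normal]
    {g : G} (h : ∀ p : ℕ, 1 ≤ p → g ^ p ∉ N) : ¬IsOfFinOrder (g : G ⧸ N) := fun hfin => by
  obtain ⟨p, hp, hgp⟩ := isOfFinOrder_iff_pow_eq_one.mp hfin
  rw [← QuotientGroup.mk_pow, QuotientGroup.eq_one_iff] at hgp
  exact h p hp hgp

namespace Monoid.PushoutI

variable {ι H : Type*} {G : ι → Type*} [∀ i, Group (G i)] [Group H] {φ : ∀ i, H →* G i}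
  (N : ∀ i, Subgroup (G i)) [∀ i, (N i).Normal]

def quotientMap :
    PushoutI φ →* PushoutI fun i => (QuotientGroup.mk' (N i)).comp (φ i) :=
  lift (fun i => (of i).comp (QuotientGroup.mk' (N i))) (base _) fun i => by
    rw [MonoidHom.comp_assoc, of_comp_eq_base]

@[simp]
theorem quotientMap_of {i : ι} (g : G i) :
    quotientMap N (of (φ := φ) i g) = of i (g : G i ⧸ N i) :=
  lift_of ..

theorem mem_of_of_mem_normalClosure
    (hinj : ∀ j, Injective ((QuotientGroup.mk' (N j)).comp (φ j))) {i : ι} {a r : G i}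
    (hr : r ∈ N i) (ha : of (φ := φ) i a ∈ Subgroup.normalClosure {of i r}) : a ∈ N i := by
  have hker : Subgroup.normalClosure {of (φ := φ) i r} ≤ (quotientMap N).ker :=
    Subgroup.normalClosure_le_normal <| Set.singleton_subset_iff.mpr <| by
      simp [(QuotientGroup.eq_one_iff r).mpr hr]
  have : of (φ := fun j => (QuotientGroup.mk' (N j)).comp (φ j)) i (a : G i ⧸ N i) = 1 := by
    simpa using hker ha
  exact (QuotientGroup.eq_one_iff a).mp <| of_injective hinj i (this.trans (map_one _).symm)

end Monoid.PushoutI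

def factorKernels (n : ℕ) (N : Subgroup (FreeGroup Bool)) : ∀ i : Bool, Subgroup (Fac n i)
  | true => N
  | false => ⊥

instance (n : ℕ) (N : Subgroup (FreeGroup Bool)) [N.Normal] : ∀ i, (factorKernels n N i).Normal
  | true => ‹N.Normal›
  | false => Subgroup.normal_bot

theorem case1_embedding_general (k n : ℕ)
    (u' : FreeGroup (Fin n)) (hu : u' ≠ 1)
    (r : FreeGroup Bool)
    (hp : ∀ p : ℕ, 1 ≤ p → commWord k ^ p ∉ Subgroup.normalClosure {r}) :
    ∀ a : FreeGroup Bool,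
      Monoid.PushoutI.of (φ := amalMaps k n u') true a ∈
        Subgroup.normalClosure {Monoid.PushoutI.of (φ := amalMaps k n u') true r} →
      a ∈ Subgroup.normalClosure {r} := by
  intro a ha
  set N := Subgroup.normalClosure {r}
  have hinj : ∀ j, Injective ((QuotientGroup.mk' (factorKernels n N j)).comp (amalMaps k n u' j))
    | false => ((MonoidHom.ker_eq_bot_iff _).mp (QuotientGroup.ker_mk' ⊥)).comp <|
        zpowersHom_injective <| not_isOfFinOrder_of_isMulTorsionFree (G := FreeGroup (Fin n))
          (inv_ne_one.mpr hu)
    | true => by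
      change Injective ((QuotientGroup.mk' N).comp (zpowersHom _ (commWord k)))
      rw [MonoidHom.comp_zpowersHom]
      exact zpowersHom_injective (QuotientGroup.not_isOfFinOrder_mk hp)
  exact Monoid.PushoutI.mem_of_of_mem_normalClosure (G := Fac n) (factorKernels n N) hinj
    (i := true) (a := a) (r := r) (Subgroup.subset_normalClosure rfl) ha

/-- Case 1 of Section 5.2: if `r̃ ∈ H̃` and `[xᵏ,b]ᵖ ∉ ((r̃))` for all `p ≥ 1` (normal closure
in `H̃`), then the natural map `H̃/((r̃)) → H/⟨⟨r̃⟩⟩` is injective: any element of `H̃` whose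
image in `H` lies in the normal closure of `r̃` in `H` already lies in the normal closure of
`r̃` in `H̃`. -/
theorem case1_embedding (k n : ℕ) (hk : 1 ≤ k) (hn : 1 ≤ n)
    (u' : FreeGroup (Fin n)) (hu : u' ≠ 1)
    (r : FreeGroup Bool)
    (hp : ∀ p : ℕ, 1 ≤ p → commWord k ^ p ∉ Subgroup.normalClosure {r}) :
    ∀ a : FreeGroup Bool,
      Monoid.PushoutI.of (φ := amalMaps k n u') true a ∈
        Subgroup.normalClosure {Monoid.PushoutI.of (φ := amalMaps k n u') true r} →
      a ∈ Subgroup.normalClosure {r} :=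
  case1_embedding_general k n u' hu r hp
end
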